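/- For any integer n ≥ 2 and any A > 0, there exists f ∈ C² ∩ Δ^(0)({0}) such that, for every polynomial P_n of degree ≤ n with P_n ∈ Δ^(0)({0}) and satisfying P_n^(i)(0) = f^(i)(0) for all 0 ≤ i ≤ 2, one has ‖f - P_n‖ > A ‖f''‖. Hence copositive approximation with second-order Hermite interpolation at the sign-change point 0 is impossible for f ∈ C². -/

import Mathlib

/-!
Take `f(x) = M x - M² (1 - cos (x / M))` with `M` small. Then `|f''| ≤ 1`, `f` is copositive
because `1 - cos u ≤ u` for `u ≥ 0`, and the 2-jet of `f` at `0` is `(0, M, -1)`. If a copositive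
polynomial `P` of degree `≤ n` has the same 2-jet, then `0 ≤ P(4M) = -4M² + R`, where the cubic
Taylor remainder `R` is `O(‖P‖ M³)` by the equivalence of norms on polynomials of degree `≤ n`.
Hence `‖P‖ ≳ 1 / M`, whereas `‖f - P‖ ≤ A ‖f''‖` would give `‖P‖ ≤ |A| + 3`.
-/

/-- The sup norm of `g` on `[a,b]`. -/
noncomputable def supNorm (g : ℝ → ℝ) (a b : ℝ) : ℝ :=
  sSup ((fun x => |g x|) '' Set.Icc a b)

/-- `g ∈ Δ^(0)({0})`: `g ≤ 0` on `[-1,0]` and `g ≥ 0` on `[0,1]`. -/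
def Delta0Zero (g : ℝ → ℝ) : Prop :=
  (∀ x ∈ Set.Icc (-1 : ℝ) 0, g x ≤ 0) ∧ (∀ x ∈ Set.Icc (0 : ℝ) 1, 0 ≤ g x)

open Finset Real
open scoped Nat Polynomial

section SupNorm

variable {g : ℝ → ℝ} {a b c : ℝ}

lemma supNorm_nonneg : 0 ≤ supNorm g a b :=
  Real.sSup_nonneg (by rintro _ ⟨x, -, rfl⟩; exact abs_nonneg _)

lemma supNorm_le (hc : 0 ≤ c) (hg : ∀ x ∈ Set.Icc a b, |g x| ≤ c) : supNorm g a b ≤ c :=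
  Real.sSup_le (by rintro _ ⟨x, hx, rfl⟩; exact hg x hx) hc

lemma abs_le_supNorm (hg : ContinuousOn g (Set.Icc a b)) {x : ℝ} (hx : x ∈ Set.Icc a b) :
    |g x| ≤ supNorm g a b :=
  le_csSup (isCompact_Icc.bddAbove_image hg.abs) ⟨x, hx, rfl⟩

end SupNorm

namespace Polynomial

theorem iterate_derivative_eval_zero {R : Type*} [Semiring R] (p : R[X]) (k : ℕ) :
    (derivative^[k] p).eval 0 = k ! * p.coeff k := by
  rw [← coeff_zero_eq_eval_zero, coeff_iterate_derivative, zero_add, Nat.descFactorial_self,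
    nsmul_eq_mul]

theorem abs_eval_sub_sum_range_le (p : ℝ[X]) {k N : ℕ} (hk : k ≤ N) (hN : p.natDegree < N)
    {y : ℝ} (hy : |y| ≤ 1) :
    |p.eval y - ∑ i ∈ range k, p.coeff i * y ^ i| ≤ |y| ^ k * ∑ i ∈ range N, |p.coeff i| := by
  rw [eval_eq_sum_range' hN, ← sum_range_add_sum_Ico _ hk, add_sub_cancel_left]
  calc |∑ i ∈ Ico k N, p.coeff i * y ^ i|
      ≤ ∑ i ∈ Ico k N, |p.coeff i| * |y| ^ k := by
        refine (abs_sum_le_sum_abs _ _).trans (sum_le_sum fun i hi => ?_)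
        rw [abs_mul, abs_pow]
        exact mul_le_mul_of_nonneg_left
          (pow_le_pow_of_le_one (abs_nonneg y) hy (mem_Ico.1 hi).1) (abs_nonneg _)
    _ ≤ ∑ i ∈ range N, |p.coeff i| * |y| ^ k :=
        sum_le_sum_of_subset_of_nonneg (fun i hi => mem_range.2 (mem_Ico.1 hi).2)
          fun _ _ _ => by positivity
    _ = |y| ^ k * ∑ i ∈ range N, |p.coeff i| := by rw [← sum_mul, mul_comm]

theorem exists_sum_abs_coeff_le (n N : ℕ) :
    ∃ K, 0 ≤ K ∧ ∀ p : ℝ[X], p.natDegree ≤ n → ∀ B : ℝ,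
      (∀ x ∈ Set.Icc (-1 : ℝ) 1, |p.eval x| ≤ B) → ∑ i ∈ range N, |p.coeff i| ≤ K * B := by
  set s := range (n + 1)
  set v : ℕ → ℝ := fun j => j / (n + 1)
  have hv : Set.InjOn v s := fun i _ j _ h => by
    exact_mod_cast (div_left_inj' (Nat.cast_add_one_ne_zero (R := ℝ) n)).1 h
  have hvI : ∀ j ∈ s, v j ∈ Set.Icc (-1 : ℝ) 1 := fun j hj => by
    have hj : (j : ℝ) ≤ n + 1 := by exact_mod_cast (mem_range.1 hj).le
    exact ⟨(by norm_num : (-1 : ℝ) ≤ 0).trans (by positivity), div_le_one_of_le₀ hj (by positivity)⟩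
  refine ⟨∑ i ∈ range N, ∑ j ∈ s, |(Lagrange.basis s v j).coeff i|, by positivity,
    fun p hp B hB => ?_⟩
  have hrep : p = ∑ j ∈ s, C (p.eval (v j)) * Lagrange.basis s v j := by
    rw [← Lagrange.interpolate_apply]
    refine Lagrange.eq_interpolate hv (degree_le_natDegree.trans_lt ?_)
    rw [card_range]
    exact_mod_cast Nat.lt_succ_of_le hp
  rw [sum_mul]
  refine sum_le_sum fun i _ => ?_
  rw [hrep, finsetSum_coeff, sum_mul]
  refine (abs_sum_le_sum_abs _ _).trans (sum_le_sum fun j hj => ?_)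
  rw [coeff_C_mul, abs_mul, mul_comm]
  exact mul_le_mul_of_nonneg_left (hB _ (hvI j hj)) (abs_nonneg _)

theorem exists_abs_eval_sub_sum_range_le (n k : ℕ) :
    ∃ K, 0 ≤ K ∧ ∀ p : ℝ[X], p.natDegree ≤ n → ∀ B : ℝ,
      (∀ x ∈ Set.Icc (-1 : ℝ) 1, |p.eval x| ≤ B) → ∀ y : ℝ, |y| ≤ 1 →
        |p.eval y - ∑ i ∈ range k, p.coeff i * y ^ i| ≤ K * B * |y| ^ k := by
  obtain ⟨K, hK, hcoeff⟩ := exists_sum_abs_coeff_le n (n + 1 + k)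
  refine ⟨K, hK, fun p hp B hB y hy => ?_⟩
  calc |p.eval y - ∑ i ∈ range k, p.coeff i * y ^ i|
      ≤ |y| ^ k * ∑ i ∈ range (n + 1 + k), |p.coeff i| :=
        abs_eval_sub_sum_range_le p (by omega) (by omega) hy
    _ ≤ |y| ^ k * (K * B) := mul_le_mul_of_nonneg_left (hcoeff p hp B hB) (by positivity)
    _ = K * B * |y| ^ k := by ring

theorem exists_pos_le_mul_bound_of_nonneg_of_coeff (n : ℕ) :
    ∃ c > 0, ∀ M : ℝ, 0 < M → 4 * M ≤ 1 → ∀ p : ℝ[X], p.natDegree ≤ n →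
      (∀ x ∈ Set.Icc (0 : ℝ) 1, 0 ≤ p.eval x) →
      p.coeff 0 = 0 → p.coeff 1 = M → p.coeff 2 = -1 / 2 → ∀ B : ℝ,
      (∀ x ∈ Set.Icc (-1 : ℝ) 1, |p.eval x| ≤ B) → c ≤ M * B := by
  obtain ⟨K, hK, hremainder⟩ := exists_abs_eval_sub_sum_range_le n 3
  refine ⟨1 / (16 * (K + 1)), by positivity, fun M hM hM4 p hp hnonneg h0 h1 h2 B hbound => ?_⟩
  have hB : 0 ≤ B := (abs_nonneg _).trans (hbound 0 (by norm_num))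
  have hy : |4 * M| ≤ 1 := by rwa [abs_of_pos (by positivity)]
  have hupper := (abs_le.1 (hremainder p hp B hbound _ hy)).2
  have hpy : 0 ≤ p.eval (4 * M) := hnonneg _ ⟨by positivity, hM4⟩
  simp only [sum_range_succ, sum_range_zero, h0, h1, h2, abs_of_pos (by positivity : 0 < 4 * M)]
    at hupper
  have hcubic : 4 * M ^ 2 * 1 ≤ 4 * M ^ 2 * (16 * K * B * M) := by linarith
  have hKBM : 1 ≤ 16 * K * B * M := le_of_mul_le_mul_left hcubic (by positivity)
  rw [div_le_iff₀ (by positivity)]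
  nlinarith [mul_nonneg hB hM.le]

end Polynomial

noncomputable def tiltedCosine (M x : ℝ) : ℝ :=
  M * x - M ^ 2 * (1 - cos (x / M))

section tiltedCosine

variable {M : ℝ}

lemma contDiff_tiltedCosine (M : ℝ) {k : WithTop ℕ∞} : ContDiff ℝ k (tiltedCosine M) := by
  unfold tiltedCosine
  fun_prop

lemma tiltedCosine_zero (M : ℝ) : tiltedCosine M 0 = 0 := by
  simp [tiltedCosine]

lemma hasDerivAt_tiltedCosine (hM : M ≠ 0) (x : ℝ) :
    HasDerivAt (tiltedCosine M) (M - M * sin (x / M)) x := by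
  have hcos := (((hasDerivAt_id' x).div_const M).cos.const_sub 1).const_mul (M ^ 2)
  refine (((hasDerivAt_id' x).const_mul M).sub hcos).congr_deriv ?_
  field_simp

lemma deriv_tiltedCosine (hM : M ≠ 0) :
    deriv (tiltedCosine M) = fun x => M - M * sin (x / M) :=
  funext fun x => (hasDerivAt_tiltedCosine hM x).deriv

lemma iteratedDeriv_two_tiltedCosine (hM : M ≠ 0) (x : ℝ) :
    iteratedDeriv 2 (tiltedCosine M) x = -cos (x / M) := by
  rw [iteratedDeriv_succ, iteratedDeriv_one, deriv_tiltedCosine hM]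
  refine ((((hasDerivAt_id' x).div_const M).sin.const_mul M).const_sub M).deriv.trans ?_
  field_simp

lemma delta0Zero_tiltedCosine (hM : 0 ≤ M) : Delta0Zero (tiltedCosine M) := by
  constructor
  · intro x hx
    have hcos : 0 ≤ M ^ 2 * (1 - cos (x / M)) :=
      mul_nonneg (sq_nonneg M) (sub_nonneg.2 (cos_le_one _))
    have hMx : M * x ≤ 0 := mul_nonpos_of_nonneg_of_nonpos hM hx.2
    unfold tiltedCosine
    linarith
  · intro x hx
    have hcos : 1 - cos (x / M) ≤ x / M := by
      simpa [abs_of_nonneg (div_nonneg hx.1 hM)] using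
        (abs_le.1 (abs_cos_sub_cos_le 0 (x / M))).2
    have hMx : M ^ 2 * (x / M) = M * x := by
      rcases hM.eq_or_lt with rfl | hM
      · simp
      · field_simp
    unfold tiltedCosine
    linarith [mul_le_mul_of_nonneg_left hcos (sq_nonneg M)]

lemma abs_tiltedCosine_le (hM : 0 ≤ M) (x : ℝ) : |tiltedCosine M x| ≤ M * |x| + 2 * M ^ 2 := by
  have hcos : |1 - cos (x / M)| ≤ 2 := by
    rw [abs_le]; constructor <;> linarith [neg_one_le_cos (x / M), cos_le_one (x / M)]
  calc |tiltedCosine M x| ≤ |M * x| + |M ^ 2 * (1 - cos (x / M))| := abs_sub _ _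
    _ ≤ M * |x| + 2 * M ^ 2 := by
      rw [abs_mul, abs_mul, abs_of_nonneg hM, abs_of_nonneg (sq_nonneg M)]
      nlinarith [sq_nonneg M]

lemma continuous_tiltedCosine (M : ℝ) : Continuous (tiltedCosine M) :=
  (contDiff_tiltedCosine M (k := 0)).continuous

lemma iteratedDerivWithin_Icc_tiltedCosine {a b x : ℝ} (hab : a < b) (hx : x ∈ Set.Icc a b)
    (i : ℕ) :
    iteratedDerivWithin i (tiltedCosine M) (Set.Icc a b) x = iteratedDeriv i (tiltedCosine M) x :=
  iteratedDerivWithin_eq_iteratedDeriv (uniqueDiffOn_Icc hab) (contDiff_tiltedCosine M).contDiffAt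
    hx

lemma supNorm_iteratedDerivWithin_two_tiltedCosine_le (hM : M ≠ 0) :
    supNorm (iteratedDerivWithin 2 (tiltedCosine M) (Set.Icc (-1) 1)) (-1) 1 ≤ 1 :=
  supNorm_le zero_le_one fun x hx => by
    rw [iteratedDerivWithin_Icc_tiltedCosine (by norm_num) hx, iteratedDeriv_two_tiltedCosine hM,
      abs_neg]
    exact abs_cos_le_one _

lemma coeff_eq_of_iterate_derivative_eval_zero_eq_tiltedCosine (hM : M ≠ 0) {P : ℝ[X]}
    (hP : ∀ i ≤ 2, (Polynomial.derivative^[i] P).eval 0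
      = iteratedDerivWithin i (tiltedCosine M) (Set.Icc (-1) 1) 0) :
    P.coeff 0 = 0 ∧ P.coeff 1 = M ∧ P.coeff 2 = -1 / 2 := by
  have hcoeff : ∀ i ≤ 2, i ! * P.coeff i = iteratedDeriv i (tiltedCosine M) 0 := fun i hi => by
    rw [← Polynomial.iterate_derivative_eval_zero, hP i hi,
      iteratedDerivWithin_Icc_tiltedCosine (by norm_num) (by norm_num)]
  refine ⟨?_, ?_, ?_⟩
  · simpa [tiltedCosine_zero] using hcoeff 0 (by norm_num)
  · simpa [deriv_tiltedCosine hM] using hcoeff 1 (by norm_num)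
  · have h2 := hcoeff 2 le_rfl
    rw [iteratedDeriv_two_tiltedCosine hM] at h2
    norm_num at h2
    linarith

lemma abs_eval_le_of_supNorm_tiltedCosine_sub_le (hM : 0 ≤ M) (hM1 : M ≤ 1) {P : ℝ[X]} {D : ℝ}
    (hD : supNorm (fun x => tiltedCosine M x - P.eval x) (-1) 1 ≤ D) :
    ∀ x ∈ Set.Icc (-1 : ℝ) 1, |P.eval x| ≤ D + 3 := fun x hx => by
  have hx1 : |x| ≤ 1 := abs_le.2 hx
  have hdist := (abs_le_supNorm
    ((continuous_tiltedCosine M).sub P.continuous).continuousOn hx).trans hD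
  calc |P.eval x| = |tiltedCosine M x - (tiltedCosine M x - P.eval x)| := by rw [sub_sub_cancel]
    _ ≤ |tiltedCosine M x| + |tiltedCosine M x - P.eval x| := abs_sub _ _
    _ ≤ (M * |x| + 2 * M ^ 2) + D := add_le_add (abs_tiltedCosine_le hM x) hdist
    _ ≤ D + 3 := by nlinarith

end tiltedCosine

theorem statement16_general (n : ℕ) (A : ℝ) :
    ∃ f : ℝ → ℝ, ContDiffOn ℝ 2 f (Set.Icc (-1 : ℝ) 1) ∧ Delta0Zero f ∧
      ∀ P : Polynomial ℝ, P.natDegree ≤ n →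
        Delta0Zero (fun x => P.eval x) →
        (∀ i : ℕ, i ≤ 2 → (Polynomial.derivative^[i] P).eval 0
            = iteratedDerivWithin i f (Set.Icc (-1 : ℝ) 1) 0) →
        A * supNorm (iteratedDerivWithin 2 f (Set.Icc (-1 : ℝ) 1)) (-1) 1
          < supNorm (fun x => f x - P.eval x) (-1) 1 := by
  obtain ⟨c, hc, hlarge⟩ := Polynomial.exists_pos_le_mul_bound_of_nonneg_of_coeff n
  set B := |A| + 3
  set M := min (1 / 4) (c / (2 * B))
  have hB : 0 < B := by positivity
  have hM : 0 < M := lt_min (by norm_num) (by positivity)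
  have hM4 : 4 * M ≤ 1 := by linarith [min_le_left (1 / 4 : ℝ) (c / (2 * B))]
  have hMB : M * B < c := calc
    M * B ≤ c / (2 * B) * B := mul_le_mul_of_nonneg_right (min_le_right _ _) hB.le
    _ = c / 2 := by field_simp
    _ < c := half_lt_self hc
  refine ⟨tiltedCosine M, (contDiff_tiltedCosine M).contDiffOn, delta0Zero_tiltedCosine hM.le,
    fun P hP hPsign hPtaylor => ?_⟩
  by_contra! hclose
  have hA : A * supNorm (iteratedDerivWithin 2 (tiltedCosine M) (Set.Icc (-1) 1)) (-1) 1 ≤ |A| :=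
    (mul_le_mul (le_abs_self A) (supNorm_iteratedDerivWithin_two_tiltedCosine_le hM.ne')
      supNorm_nonneg (abs_nonneg A)).trans_eq (mul_one _)
  obtain ⟨h0, h1, h2⟩ := coeff_eq_of_iterate_derivative_eval_zero_eq_tiltedCosine hM.ne' hPtaylor
  exact hMB.not_ge (hlarge M hM hM4 P hP hPsign.2 h0 h1 h2 B
    (abs_eval_le_of_supNorm_tiltedCosine_sub_le hM.le (by linarith) (hclose.trans hA)))

/-- Copositive approximation with interpolation at `Y_s = {0}`, negative result for
`f ∈ C²` with second-order interpolation: for any `n ≥ 2` and `A > 0`, there is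
`f ∈ C²[-1,1] ∩ Δ^(0)({0})` such that any polynomial of degree ≤ n in `Δ^(0)({0})`
with `P_n^{(i)}(0) = f^{(i)}(0)` for `0 ≤ i ≤ 2` satisfies `‖f - P_n‖ > A ‖f''‖`. -/
theorem statement16 (n : ℕ) (hn : 2 ≤ n) (A : ℝ) (hA : 0 < A) :
    ∃ f : ℝ → ℝ, ContDiffOn ℝ 2 f (Set.Icc (-1 : ℝ) 1) ∧ Delta0Zero f ∧
      ∀ P : Polynomial ℝ, P.natDegree ≤ n →
        Delta0Zero (fun x => P.eval x) →
        (∀ i : ℕ, i ≤ 2 → (Polynomial.derivative^[i] P).eval 0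
            = iteratedDerivWithin i f (Set.Icc (-1 : ℝ) 1) 0) →
        A * supNorm (iteratedDerivWithin 2 f (Set.Icc (-1 : ℝ) 1)) (-1) 1
          < supNorm (fun x => f x - P.eval x) (-1) 1 :=
  statement16_general n A
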